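/- arXiv:1708.01699 — 6 statements merged into one kernel-verified Lean document; each statement's English description precedes it below -/
import Mathlib

section
/- Let p(z) = Σ_{j=0}^{d} c_j z^j ∈ ℂ[z] be a stable polynomial with p(0) = 1 (so c_0 = 1). Then for all z ∈ ℂ, |p(z)| ≤ exp(|z|·|c_1| + 3|z|²·(|c_1|² + |c_2|)). -/
/-!
Stability and `p(0) = 1` give `p(z) = ∏ⱼ (1 - wⱼ z)` with the inverse roots `wⱼ` in the closed
upper half-plane. From `|1 + u| ≤ exp (Re u + |u|² / 2)` we get
`|p(z)| ≤ exp (Re (c₁ z) + |z|² / 2 · ∑ |wⱼ|²)`, using `∑ wⱼ = -c₁`. Finally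
`|w|² = Re (w²) + 2 (Im w)²`, and since all `Im wⱼ ≥ 0`,
`∑ (Im wⱼ)² ≤ (Im ∑ wⱼ)² ≤ |c₁|²`; with `∑ wⱼ² = c₁² - 2 c₂` this bounds `∑ |wⱼ|²` by
`3 |c₁|² + 2 |c₂|`.
-/

open Polynomial Complex Finset

namespace Polynomial

section
variable {R ι : Type*} [CommRing R] (s : Finset ι) (w : ι → R)

lemma coeff_one_sub_C_mul_X_mul_succ (a : R) (q : R[X]) (n : ℕ) :
    ((1 - C a * X) * q).coeff (n + 1) = q.coeff (n + 1) - a * q.coeff n := by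
  simp [sub_mul, mul_assoc, coeff_C_mul, coeff_X_mul]

lemma coeff_zero_prod_one_sub_C_mul_X : (∏ i ∈ s, (1 - C (w i) * X)).coeff 0 = 1 := by
  simp [coeff_zero_eq_eval_zero, eval_prod]

lemma coeff_one_prod_one_sub_C_mul_X :
    (∏ i ∈ s, (1 - C (w i) * X)).coeff 1 = -∑ i ∈ s, w i := by
  induction s using Finset.cons_induction with
  | empty => simp [coeff_one]
  | cons a s ha ih =>
    rw [prod_cons, coeff_one_sub_C_mul_X_mul_succ, ih, coeff_zero_prod_one_sub_C_mul_X, sum_cons]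
    ring

lemma sum_sq_eq_coeff_prod_one_sub_C_mul_X :
    ∑ i ∈ s, w i ^ 2 =
      (∏ i ∈ s, (1 - C (w i) * X)).coeff 1 ^ 2 - 2 * (∏ i ∈ s, (1 - C (w i) * X)).coeff 2 := by
  induction s using Finset.cons_induction with
  | empty => simp [coeff_one]
  | cons a s ha ih =>
    rw [prod_cons, coeff_one_sub_C_mul_X_mul_succ, coeff_one_sub_C_mul_X_mul_succ,
      coeff_zero_prod_one_sub_C_mul_X, sum_cons, ih]
    ring

end

lemma X_sub_C_eq_C_neg_mul_one_sub_C_inv_mul_X {K : Type*} [Field K] {r : K} (hr : r ≠ 0) :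
    X - C r = C (-r) * (1 - C r⁻¹ * X) := by
  rw [mul_sub, mul_one, ← mul_assoc, ← C_mul, neg_mul, mul_inv_cancel₀ hr, C_neg, C_neg, C_1]
  ring

theorem eq_prod_one_sub_C_inv_mul_X {K : Type*} [Field K] [IsAlgClosed K] [DecidableEq K]
    {p : K[X]} (hp : p.eval 0 = 1) : p = ∏ r : p.roots, (1 - C (r : K)⁻¹ * X) := by
  have hp0 : p ≠ 0 := by rintro rfl; simp at hp
  have hroot_ne_zero (r : p.roots) : (r : K) ≠ 0 := by
    intro h
    simpa [h, hp] using (mem_roots hp0).mp (Multiset.coe_mem (x := r))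
  have hfactor : p = C (p.leadingCoeff * ∏ r : p.roots, -(r : K)) *
      ∏ r : p.roots, (1 - C (r : K)⁻¹ * X) := by
    conv_lhs => rw [(IsAlgClosed.splits p).eq_prod_roots, ← Multiset.map_univ,
      ← prod_eq_multiset_prod]
    simp_rw [fun r => X_sub_C_eq_C_neg_mul_one_sub_C_inv_mul_X (hroot_ne_zero r),
      prod_mul_distrib, C_mul, map_prod, mul_assoc]
  have hunit : p.leadingCoeff * ∏ r : p.roots, -(r : K) = 1 := by
    simpa [eval_prod] using (congrArg (eval 0) hfactor).symm.trans hp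
  rwa [hunit, C_1, one_mul] at hfactor

end Polynomial

lemma Complex.norm_one_add_le_exp (u : ℂ) : ‖1 + u‖ ≤ Real.exp (u.re + ‖u‖ ^ 2 / 2) := by
  have hsq : ‖1 + u‖ ^ 2 = 1 + (2 * u.re + ‖u‖ ^ 2) := by
    rw [← normSq_eq_norm_sq, ← normSq_eq_norm_sq, normSq_add]
    simp only [map_one, one_mul, conj_re]
    ring
  refine le_of_sq_le_sq ?_ (Real.exp_pos _).le
  calc ‖1 + u‖ ^ 2 = 1 + (2 * u.re + ‖u‖ ^ 2) := hsq
    _ ≤ Real.exp (2 * u.re + ‖u‖ ^ 2) := by linarith [Real.add_one_le_exp (2 * u.re + ‖u‖ ^ 2)]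
    _ = Real.exp (u.re + ‖u‖ ^ 2 / 2) ^ 2 := by rw [← Real.exp_nat_mul]; ring_nf

section
variable {ι : Type*} (s : Finset ι) (w : ι → ℂ)

lemma Complex.norm_prod_one_sub_mul_le_exp (z : ℂ) :
    ‖∏ i ∈ s, (1 - w i * z)‖ ≤
      Real.exp (-(z * ∑ i ∈ s, w i).re + ‖z‖ ^ 2 / 2 * ∑ i ∈ s, ‖w i‖ ^ 2) := by
  have hexp : -(z * ∑ i ∈ s, w i).re + ‖z‖ ^ 2 / 2 * ∑ i ∈ s, ‖w i‖ ^ 2 =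
      ∑ i ∈ s, ((-(w i * z)).re + ‖-(w i * z)‖ ^ 2 / 2) := by
    simp only [sum_add_distrib, mul_sum, ← re_sum, norm_neg, norm_mul]
    congr 1
    · simp [mul_comm]
    · congr 1; ext i; ring
  rw [hexp, Real.exp_sum, norm_prod]
  gcongr with i
  simpa [sub_eq_add_neg] using norm_one_add_le_exp (-(w i * z))

lemma Complex.sum_norm_sq_le_of_im_nonneg (hw : ∀ i ∈ s, 0 ≤ (w i).im) :
    ∑ i ∈ s, ‖w i‖ ^ 2 ≤ ‖∑ i ∈ s, w i ^ 2‖ + 2 * ‖∑ i ∈ s, w i‖ ^ 2 := by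
  have hsplit (v : ℂ) : ‖v‖ ^ 2 = (v ^ 2).re + 2 * v.im ^ 2 := by
    rw [← normSq_eq_norm_sq, normSq_apply, sq, mul_re]; ring
  have hre : ∑ i ∈ s, (w i ^ 2).re ≤ ‖∑ i ∈ s, w i ^ 2‖ := by
    rw [← re_sum]; exact re_le_norm _
  have him : ∑ i ∈ s, (w i).im ^ 2 ≤ ‖∑ i ∈ s, w i‖ ^ 2 :=
    calc ∑ i ∈ s, (w i).im ^ 2 ≤ (∑ i ∈ s, (w i).im) ^ 2 := sum_sq_le_sq_sum_of_nonneg hw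
      _ = (∑ i ∈ s, w i).im ^ 2 := by rw [im_sum]
      _ ≤ ‖∑ i ∈ s, w i‖ ^ 2 := by rw [← sq_abs]; gcongr; exact abs_im_le_norm _
  rw [sum_congr rfl fun i _ => hsplit (w i), sum_add_distrib, ← mul_sum]
  linarith

theorem Complex.norm_eval_prod_one_sub_C_mul_X_le_exp (hw : ∀ i ∈ s, 0 ≤ (w i).im) (z : ℂ) :
    ‖(∏ i ∈ s, (1 - C (w i) * X)).eval z‖ ≤
      Real.exp (‖z‖ * ‖(∏ i ∈ s, (1 - C (w i) * X)).coeff 1‖ +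
        3 * ‖z‖ ^ 2 * (‖(∏ i ∈ s, (1 - C (w i) * X)).coeff 1‖ ^ 2 +
          ‖(∏ i ∈ s, (1 - C (w i) * X)).coeff 2‖)) := by
  set c₁ := (∏ i ∈ s, (1 - C (w i) * X)).coeff 1 with hc₁
  set c₂ := (∏ i ∈ s, (1 - C (w i) * X)).coeff 2
  have hsum : ∑ i ∈ s, w i = -c₁ := by rw [hc₁, coeff_one_prod_one_sub_C_mul_X, neg_neg]
  have hre : -(z * ∑ i ∈ s, w i).re ≤ ‖z‖ * ‖c₁‖ := by
    rw [hsum, mul_neg, neg_re, neg_neg, ← norm_mul]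
    exact re_le_norm _
  have hnorm : ∑ i ∈ s, ‖w i‖ ^ 2 ≤ 3 * ‖c₁‖ ^ 2 + 2 * ‖c₂‖ := by
    have hsq : ‖∑ i ∈ s, w i ^ 2‖ ≤ ‖c₁‖ ^ 2 + 2 * ‖c₂‖ := by
      rw [sum_sq_eq_coeff_prod_one_sub_C_mul_X]
      exact (norm_sub_le _ _).trans_eq (by rw [norm_pow, norm_mul, Complex.norm_two])
    have := sum_norm_sq_le_of_im_nonneg s w hw
    rw [hsum, norm_neg] at this
    linarith
  simp only [eval_prod, eval_sub, eval_one, eval_mul, eval_C, eval_X]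
  refine (norm_prod_one_sub_mul_le_exp s w z).trans (Real.exp_le_exp.mpr ?_)
  nlinarith [norm_nonneg c₂, sq_nonneg ‖z‖]

end

lemma Polynomial.im_inv_nonneg_of_mem_roots {p : ℂ[X]} (hstable : ∀ z : ℂ, 0 < z.im → p.eval z ≠ 0) (hp : p ≠ 0)
    {r : ℂ} (hr : r ∈ p.roots) : 0 ≤ r⁻¹.im := by
  have : ¬ 0 < r.im := fun h => hstable r h ((mem_roots hp).mp hr)
  rw [inv_im]
  exact div_nonneg (by linarith) (normSq_nonneg _)

theorem szasz_inequality (p : Polynomial ℂ)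
    (hstable : ∀ z : ℂ, 0 < z.im → p.eval z ≠ 0)
    (hp0 : p.eval 0 = 1) :
    ∀ z : ℂ,
      ‖p.eval z‖ ≤
        Real.exp (‖z‖ * ‖p.coeff 1‖ +
          3 * ‖z‖ ^ 2 *
            (‖p.coeff 1‖ ^ 2 + ‖p.coeff 2‖)) := by
  classical
  intro z
  have hp : p ≠ 0 := by rintro rfl; simp at hp0
  have h := norm_eval_prod_one_sub_C_mul_X_le_exp univ (fun r : p.roots => (r : ℂ)⁻¹)
    (fun r _ => Polynomial.im_inv_nonneg_of_mem_roots hstable hp Multiset.coe_mem) z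
  rwa [← eq_prod_one_sub_C_inv_mul_X hp0] at h
end

section
/- Let c_1, c_2 ∈ ℝ with γ := (c_1² − 2c_2)/2 > 0. Then there exists a sequence of stable polynomials p_n ∈ ℝ[z] with constant coefficient 1, coefficient of z equal to c_1, and coefficient of z² equal to c_2, such that for every y ∈ ℝ, lim_{n→∞} |p_n(iy)| = exp(γ y²). -/
/-!
Take `p = q ^ k` with `q = 1 + (c₁ / k) z + m z²`, where `m = (c₁² / k - 2γ) / (2k)` is forced by
the coefficient of `z²` in `p`. Then `|q(iy)|² = 1 + (2γ / k) y² + m² y⁴` with `m = O(1 / k)`, so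
`|p(iy)|² = (1 + 2γy² / k + O(1 / k²)) ^ k → exp (2γy²)`. Once `k ≥ c₁² / (4γ)` the discriminant of
`q` is nonnegative, so `q` is a product of two real linear factors `1 + uz`, each zero-free off `ℝ`.
-/

open Polynomial Filter Topology

def IsStable (p : ℝ[X]) : Prop :=
  ∀ z : ℂ, 0 < z.im → (p.map (algebraMap ℝ ℂ)).eval z ≠ 0

namespace IsStable

theorem mul {p q : ℝ[X]} (hp : IsStable p) (hq : IsStable q) : IsStable (p * q) := by
  intro z hz
  rw [Polynomial.map_mul, eval_mul]
  exact mul_ne_zero (hp z hz) (hq z hz)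

theorem pow {p : ℝ[X]} (hp : IsStable p) (k : ℕ) : IsStable (p ^ k) := by
  intro z hz
  rw [Polynomial.map_pow, eval_pow]
  exact pow_ne_zero k (hp z hz)

end IsStable

theorem isStable_one_add_C_mul_X (a : ℝ) : IsStable (1 + C a * X) := by
  intro z hz h
  have him := congrArg Complex.im h
  simp [hz.ne'] at him
  simp [him] at h

theorem exists_add_eq_and_mul_eq {s m : ℝ} (h : 4 * m ≤ s ^ 2) :
    ∃ u v : ℝ, u + v = s ∧ u * v = m := by
  refine ⟨(s + √(s ^ 2 - 4 * m)) / 2, (s - √(s ^ 2 - 4 * m)) / 2, by ring, ?_⟩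
  have := Real.sq_sqrt (sub_nonneg.mpr h)
  linear_combination (-1 / 4 : ℝ) * this

theorem isStable_one_add_C_mul_X_add_C_mul_X_sq {s m : ℝ} (h : 4 * m ≤ s ^ 2) :
    IsStable (1 + C s * X + C m * X ^ 2) := by
  obtain ⟨u, v, rfl, rfl⟩ := exists_add_eq_and_mul_eq h
  have : 1 + C (u + v) * X + C (u * v) * X ^ 2 = (1 + C u * X) * (1 + C v * X) := by
    simp only [C_add, C_mul]; ring
  rw [this]
  exact (isStable_one_add_C_mul_X u).mul (isStable_one_add_C_mul_X v)

theorem normSq_eval_one_add_C_mul_X_add_C_mul_X_sq (s m y : ℝ) :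
    Complex.normSq (((1 + C s * X + C m * X ^ 2).map (algebraMap ℝ ℂ)).eval (Complex.I * y)) =
      1 + (s ^ 2 - 2 * m) * y ^ 2 + m ^ 2 * y ^ 4 := by
  have : ((1 + C s * X + C m * X ^ 2).map (algebraMap ℝ ℂ)).eval (Complex.I * y) =
      ⟨1 - m * y ^ 2, s * y⟩ :=
    Complex.ext (by simp [sq]; ring) (by simp [sq])
  rw [this, Complex.normSq_mk]
  ring

section CoeffPow

variable {R : Type*} [CommSemiring R] {q : R[X]}

theorem coeff_pow_zero_of_coeff_zero_eq_one (hq : q.coeff 0 = 1) (k : ℕ) :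
    (q ^ k).coeff 0 = 1 := by
  rw [coeff_zero_eq_eval_zero, eval_pow, ← coeff_zero_eq_eval_zero, hq, one_pow]

theorem coeff_pow_one_of_coeff_zero_eq_one (hq : q.coeff 0 = 1) (k : ℕ) :
    (q ^ k).coeff 1 = k * q.coeff 1 := by
  induction k with
  | zero => simp [coeff_one]
  | succ k ih =>
    rw [pow_succ, coeff_mul]
    simp only [Finset.Nat.sum_antidiagonal_succ, coeff_pow_zero_of_coeff_zero_eq_one hq, zero_add,
      one_mul, Finset.HasAntidiagonal.antidiagonal_zero, Finset.sum_singleton, ih, hq, mul_one,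
      Nat.cast_add, Nat.cast_one]
    ring

theorem coeff_pow_two_of_coeff_zero_eq_one (hq : q.coeff 0 = 1) (k : ℕ) :
    (q ^ k).coeff 2 = k * q.coeff 2 + k.choose 2 * q.coeff 1 ^ 2 := by
  induction k with
  | zero => simp [coeff_one]
  | succ k ih =>
    rw [pow_succ, coeff_mul]
    simp only [Finset.Nat.sum_antidiagonal_succ, coeff_pow_zero_of_coeff_zero_eq_one hq,
      Nat.reduceAdd, one_mul, zero_add, coeff_pow_one_of_coeff_zero_eq_one hq,
      Finset.HasAntidiagonal.antidiagonal_zero, Finset.sum_singleton, ih, hq, mul_one, Nat.cast_add,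
      Nat.cast_one, Nat.choose_succ_succ', Nat.choose_one_right]
    ring

end CoeffPow

noncomputable def szaszPoly (c₁ γ : ℝ) (k : ℕ) : ℝ[X] :=
  (1 + C (c₁ / k) * X + C ((c₁ ^ 2 / k - 2 * γ) / (2 * k)) * X ^ 2) ^ k

section SzaszPoly

variable {c₁ γ : ℝ} {k : ℕ}

theorem isStable_szaszPoly (h : c₁ ^ 2 ≤ 4 * γ * k) : IsStable (szaszPoly c₁ γ k) := by
  refine IsStable.pow (isStable_one_add_C_mul_X_add_C_mul_X_sq ?_) k
  rcases k.eq_zero_or_pos with rfl | hk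
  · simp
  · have hk : (k : ℝ) ≠ 0 := by positivity
    have discr : (c₁ / k) ^ 2 - 4 * ((c₁ ^ 2 / k - 2 * γ) / (2 * k)) =
        (4 * γ * k - c₁ ^ 2) / k ^ 2 := by
      field_simp; ring
    have : 0 ≤ (4 * γ * k - c₁ ^ 2) / k ^ 2 := div_nonneg (by linarith) (by positivity)
    linarith

theorem coeff_szaszPoly_zero : (szaszPoly c₁ γ k).coeff 0 = 1 :=
  coeff_pow_zero_of_coeff_zero_eq_one (by simp) k

theorem coeff_szaszPoly_one (hk : k ≠ 0) : (szaszPoly c₁ γ k).coeff 1 = c₁ := by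
  rw [szaszPoly, coeff_pow_one_of_coeff_zero_eq_one (by simp)]
  simp [coeff_one, field]

theorem coeff_szaszPoly_two (hk : k ≠ 0) : (szaszPoly c₁ γ k).coeff 2 = c₁ ^ 2 / 2 - γ := by
  rw [szaszPoly, coeff_pow_two_of_coeff_zero_eq_one (by simp), Nat.cast_choose_two]
  simp only [coeff_add, coeff_one, OfNat.ofNat_ne_zero, ↓reduceIte, coeff_mul_X, coeff_C_succ,
    add_zero, coeff_C_mul, coeff_X_pow, mul_one, zero_add, one_ne_zero, coeff_C_zero,
    OfNat.one_ne_ofNat, mul_zero]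
  field_simp
  ring

theorem tendsto_norm_eval_szaszPoly (y : ℝ) :
    Tendsto (fun k ↦ ‖((szaszPoly c₁ γ k).map (algebraMap ℝ ℂ)).eval (Complex.I * y)‖) atTop
      (𝓝 (Real.exp (γ * y ^ 2))) := by
  set m : ℕ → ℝ := fun k ↦ (c₁ ^ 2 / k - 2 * γ) / (2 * k)
  set g : ℕ → ℝ := fun k ↦ 2 * γ / k * y ^ 2 + m k ^ 2 * y ^ 4
  have hnorm : ∀ k, ‖((szaszPoly c₁ γ k).map (algebraMap ℝ ℂ)).eval (Complex.I * y)‖ =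
      √((1 + g k) ^ k) := by
    intro k
    have hsm : (c₁ / k) ^ 2 - 2 * m k = 2 * γ / k := by
      rcases eq_or_ne (k : ℝ) 0 with hk | hk
      · simp [m, hk]
      · simp only [m]; field_simp; ring
    rw [szaszPoly, Polynomial.map_pow, eval_pow, Complex.norm_def, map_pow,
      normSq_eval_one_add_C_mul_X_add_C_mul_X_sq, hsm, add_assoc]
  have hg : Tendsto (fun k : ℕ ↦ k * g k) atTop (𝓝 (2 * (γ * y ^ 2))) := by
    -- `k * m k ^ 2 = (c₁² / k - 2γ)² / (4k)`
    have hrem : Tendsto (fun k : ℕ ↦ (c₁ ^ 2 * (1 / k) - 2 * γ) ^ 2 / 4 * y ^ 4 * (1 / k)) atTop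
        (𝓝 0) := by
      have h := tendsto_one_div_atTop_nhds_zero_nat (𝕜 := ℝ)
      simpa using ((((h.const_mul (c₁ ^ 2)).sub_const (2 * γ)).pow 2).div_const 4).mul_const
        (y ^ 4) |>.mul h
    refine (hrem.const_add (2 * (γ * y ^ 2))).congr' ?_ |>.trans (by rw [add_zero])
    filter_upwards [eventually_ne_atTop 0] with k hk
    have hk : (k : ℝ) ≠ 0 := Nat.cast_ne_zero.mpr hk
    simp only [g, m]
    field_simp
    ring
  simp only [hnorm]
  convert (Real.tendsto_one_add_pow_exp_of_tendsto hg).sqrt using 2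
  rw [← Real.exp_half, mul_div_cancel_left₀ _ two_ne_zero]

end SzaszPoly

theorem szasz_sharpness (c₁ c₂ : ℝ) (hγ : 0 < (c₁ ^ 2 - 2 * c₂) / 2) :
    ∃ p : ℕ → Polynomial ℝ,
      (∀ n, ∀ z : ℂ, 0 < z.im → ((p n).map (algebraMap ℝ ℂ)).eval z ≠ 0) ∧
      (∀ n, (p n).coeff 0 = 1) ∧
      (∀ n, (p n).coeff 1 = c₁) ∧
      (∀ n, (p n).coeff 2 = c₂) ∧
      (∀ y : ℝ,
        Tendsto
          (fun n => ‖((p n).map (algebraMap ℝ ℂ)).eval (Complex.I * y)‖)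
          atTop (nhds (Real.exp ((c₁ ^ 2 - 2 * c₂) / 2 * y ^ 2)))) := by
  set γ := (c₁ ^ 2 - 2 * c₂) / 2
  obtain ⟨N, hN⟩ := exists_nat_gt (c₁ ^ 2 / (4 * γ))
  have hN_pos : 0 < N := Nat.cast_pos.mp ((div_nonneg (sq_nonneg c₁) (by positivity)).trans_lt hN)
  have hk : ∀ n, n + N ≠ 0 := fun n ↦ by omega
  have hdiscr : ∀ n, c₁ ^ 2 ≤ 4 * γ * (n + N : ℕ) := fun n ↦ by
    rw [div_lt_iff₀ (by positivity)] at hN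
    push_cast
    nlinarith [(n.cast_nonneg : (0 : ℝ) ≤ n)]
  refine ⟨fun n ↦ szaszPoly c₁ γ (n + N), fun n ↦ isStable_szaszPoly (hdiscr n),
    fun n ↦ coeff_szaszPoly_zero, fun n ↦ coeff_szaszPoly_one (hk n), fun n ↦ ?_,
    fun y ↦ (tendsto_add_atTop_iff_nat N).mpr (tendsto_norm_eval_szaszPoly y)⟩
  rw [coeff_szaszPoly_two (hk n)]
  ring
end

section
/- Let α₁, …, α_d ∈ ℂ with Im α_j ≤ 0 for all j, and set p₁ = Σ_{j=1}^{d} α_j and p₂ = Σ_{j<k} α_j α_k. Then Σ_{j=1}^{d} |α_j|² ≤ 2|Σ_{j=1}^{d} α_j|² + |Σ_{j=1}^{d} α_j²|, and consequently Σ_{j=1}^{d} |α_j|² ≤ 3|p₁|² + 2|p₂|. -/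
/-! Writing `‖α‖² = Re (α²) + 2 (Im α)²` and summing gives
`∑ ‖α j‖² = Re (∑ α j²) + 2 ∑ (Im α j)²`. Since the imaginary parts all have the same sign,
`∑ (Im α j)² ≤ (∑ Im α j)² = (Im p₁)² ≤ |p₁|²`, which is the first bound. The second follows
from the Newton identity `∑ α j² = p₁² - 2 p₂`. -/

open Finset

theorem Finset.sum_eq_add_sum_Ioi_add_sum_Iio {ι M : Type*} [LinearOrder ι] [Fintype ι]
    [LocallyFiniteOrderTop ι] [LocallyFiniteOrderBot ι] [AddCommMonoid M] (g : ι → M) (i : ι) :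
    ∑ j, g j = g i + ∑ j ∈ Ioi i, g j + ∑ j ∈ Iio i, g j := by
  rw [← sum_filter_not_add_sum_filter univ (· < i), filter_gt_eq_Iio]
  simp only [not_lt]
  rw [filter_le_eq_Ici, ← Ioi_insert, sum_insert notMem_Ioi_self]

theorem Finset.sq_sum_eq_sum_sq_add_two_mul_sum_Ioi {ι R : Type*} [LinearOrder ι] [Fintype ι]
    [LocallyFiniteOrderTop ι] [LocallyFiniteOrderBot ι] [CommSemiring R] (f : ι → R) :
    (∑ i, f i) ^ 2 = ∑ i, f i ^ 2 + 2 * ∑ i, ∑ j ∈ Ioi i, f i * f j := by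
  have hswap : ∑ i, ∑ j ∈ Iio i, f i * f j = ∑ i, ∑ j ∈ Ioi i, f i * f j := by
    rw [sum_comm' (t' := univ) (s' := Ioi) (by simp [and_comm])]
    simp only [mul_comm]
  simp only [sq, sum_mul_sum,
    fun i => sum_eq_add_sum_Ioi_add_sum_Iio (fun j => f i * f j) i, sum_add_distrib, hswap]
  ring

theorem Complex.sq_norm_eq_re_sq_add_two_mul_im_sq (z : ℂ) :
    ‖z‖ ^ 2 = (z ^ 2).re + 2 * z.im ^ 2 := by
  rw [Complex.sq_norm, normSq_apply, sq, mul_re]; ring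

theorem Complex.sum_im_sq_le_sq_norm_sum {ι : Type*} (s : Finset ι) (f : ι → ℂ)
    (hf : ∀ i ∈ s, (f i).im ≤ 0) : ∑ i ∈ s, (f i).im ^ 2 ≤ ‖∑ i ∈ s, f i‖ ^ 2 :=
  calc ∑ i ∈ s, (f i).im ^ 2 = ∑ i ∈ s, (-(f i).im) ^ 2 := by simp only [neg_sq]
    _ ≤ (∑ i ∈ s, -(f i).im) ^ 2 := sum_sq_le_sq_sum_of_nonneg fun i hi => neg_nonneg.2 (hf i hi)
    _ = (∑ i ∈ s, f i).im ^ 2 := by rw [sum_neg_distrib, neg_sq, im_sum]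
    _ ≤ ‖∑ i ∈ s, f i‖ ^ 2 := sq_le_sq' (neg_le_of_abs_le (abs_im_le_norm _)) (im_le_norm _)

theorem RCLike.norm_sum_sq_le_sq_norm_sum_add {ι 𝕜 : Type*} [LinearOrder ι] [Fintype ι]
    [LocallyFiniteOrderTop ι] [LocallyFiniteOrderBot ι] [RCLike 𝕜] (f : ι → 𝕜) :
    ‖∑ i, f i ^ 2‖ ≤ ‖∑ i, f i‖ ^ 2 + 2 * ‖∑ i, ∑ j ∈ Ioi i, f i * f j‖ := by
  rw [eq_sub_of_add_eq (sq_sum_eq_sum_sq_add_two_mul_sum_Ioi f).symm]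
  calc _ ≤ ‖(∑ i, f i) ^ 2‖ + ‖2 * ∑ i, ∑ j ∈ Ioi i, f i * f j‖ := norm_sub_le _ _
    _ = _ := by rw [norm_pow, norm_mul, RCLike.norm_two]

theorem szasz_coefficient_bound (d : ℕ) (α : Fin d → ℂ)
    (hα : ∀ j, (α j).im ≤ 0) :
    (∑ j, ‖α j‖ ^ 2 ≤
      2 * ‖∑ j, α j‖ ^ 2 + ‖∑ j, α j ^ 2‖) ∧
    (∑ j, ‖α j‖ ^ 2 ≤
      3 * ‖∑ j, α j‖ ^ 2 +
        2 * ‖∑ j, ∑ k ∈ Finset.Ioi j, α j * α k‖) := by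
  have h₁ : ∑ j, ‖α j‖ ^ 2 ≤ 2 * ‖∑ j, α j‖ ^ 2 + ‖∑ j, α j ^ 2‖ :=
    calc ∑ j, ‖α j‖ ^ 2 = (∑ j, α j ^ 2).re + 2 * ∑ j, (α j).im ^ 2 := by
          simp only [Complex.sq_norm_eq_re_sq_add_two_mul_im_sq, sum_add_distrib, mul_sum,
            Complex.re_sum]
      _ ≤ ‖∑ j, α j ^ 2‖ + 2 * ‖∑ j, α j‖ ^ 2 := by
          gcongr
          · exact Complex.re_le_norm _
          · exact Complex.sum_im_sq_le_sq_norm_sum _ _ fun j _ => hα j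
      _ = _ := add_comm _ _
  exact ⟨h₁, by linarith [RCLike.norm_sum_sq_le_sq_norm_sum_add α]⟩
end

section
/- Let M be a square complex matrix with Im M := (M − M*)/(2i) positive semidefinite. Then tr(M*M) ≤ |tr M|² − Re( (tr M)² − tr(M²) ). -/
/-!
Write M = H + iK with H, K Hermitian, K = Im M. Then tr(M*M) = tr H² + tr K² and
Re tr(M²) = tr H² - tr K², while tr M = tr H + i tr K with real traces, so the claim reduces to
tr K² ≤ (tr K)², which holds for positive semidefinite K because Σ λᵢ² ≤ (Σ λᵢ)² for λᵢ ≥ 0.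
-/

open Matrix
open scoped ComplexOrder

namespace Matrix

variable {n : Type*} [Fintype n]

lemma IsHermitian.trace_mul_self_eq_sum_sq {𝕜 : Type*} [RCLike 𝕜] [DecidableEq n]
    {A : Matrix n n 𝕜} (hA : A.IsHermitian) :
    (A * A).trace = ∑ i, ((hA.eigenvalues i ^ 2 : ℝ) : 𝕜) := by
  conv_lhs => rw [hA.spectral_theorem, ← map_mul, Unitary.conjStarAlgAut_apply, trace_mul_cycle,
    Unitary.coe_star_mul_self, one_mul, diagonal_mul_diagonal, trace_diagonal]
  simp [sq]

lemma PosSemidef.re_trace_mul_self_le_sq {𝕜 : Type*} [RCLike 𝕜] {A : Matrix n n 𝕜}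
    (hA : A.PosSemidef) : RCLike.re (A * A).trace ≤ RCLike.re A.trace ^ 2 := by
  classical
  rw [hA.1.trace_mul_self_eq_sum_sq, hA.1.trace_eq_sum_eigenvalues]
  simp only [map_sum, RCLike.ofReal_re]
  exact Finset.sum_sq_le_sq_sum_of_nonneg fun i _ ↦ hA.eigenvalues_nonneg i

lemma trace_sub_conjTranspose_mul_self {R : Type*} [CommRing R] [StarRing R] (M : Matrix n n R) :
    ((M - Mᴴ) * (M - Mᴴ)).trace = (M * M).trace + star (M * M).trace - 2 * (Mᴴ * M).trace := by
  rw [sub_mul, mul_sub, mul_sub, trace_sub, trace_sub, trace_sub, trace_mul_comm M Mᴴ,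
    ← conjTranspose_mul, trace_conjTranspose]
  ring

lemma trace_imPart (M : Matrix n n ℂ) :
    ((2 * Complex.I)⁻¹ • (M - Mᴴ)).trace = M.trace.im := by
  rw [trace_smul, trace_sub, trace_conjTranspose, Complex.star_def, Complex.sub_conj, smul_eq_mul]
  field_simp
  push_cast
  ring

lemma re_trace_imPart_mul_self (M : Matrix n n ℂ) :
    (((2 * Complex.I)⁻¹ • (M - Mᴴ)) * ((2 * Complex.I)⁻¹ • (M - Mᴴ))).trace.re =
      ((Mᴴ * M).trace.re - (M * M).trace.re) / 2 := by
  rw [smul_mul_smul_comm, trace_smul, trace_sub_conjTranspose_mul_self, smul_eq_mul]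
  simp [Complex.mul_re, ← Complex.ofReal_ofNat]
  ring

end Matrix

theorem trace_sq_ineq_of_im_psd (d : ℕ) (M : Matrix (Fin d) (Fin d) ℂ)
    (hM : ((2 * Complex.I)⁻¹ • (M - Mᴴ)).PosSemidef) :
    ((Mᴴ * M).trace).re ≤
      ‖M.trace‖ ^ 2 - (M.trace ^ 2 - (M * M).trace).re := by
  have hK := hM.re_trace_mul_self_le_sq
  rw [RCLike.re_to_complex, RCLike.re_to_complex, re_trace_imPart_mul_self, trace_imPart,
    Complex.ofReal_re] at hK
  rw [Complex.sq_norm, Complex.normSq_apply, Complex.sub_re, sq, Complex.mul_re]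
  linarith
end

section
/- Let A be a d×d complex matrix with Im A := (A − A*)/(2i) positive semidefinite, and suppose the kernel of A (the eigenspace for eigenvalue 0) has dimension s. Then there exists a d×d unitary matrix U such that U* A U is block diagonal of the form diag(0_s, C), where 0_s is the s×s zero matrix and C is an invertible (d−s)×(d−s) matrix with Im C positive semidefinite. -/
/-!
If `Im A ⪰ 0` and `A x = 0`, then `x* (Im A) x = Im (x* A x) = 0`, so `(Im A) x = 0` and hence
`A* x = 0`: the kernel of `A` is contained in that of `A*`. Take for `U` a unitary matrix whose
columns are an orthonormal basis of `ker A` followed by one of `(ker A)ᗮ`. Then the first block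
column of `U* A U` vanishes because `A` kills `ker A`, and the first block row because `A*` does.
The remaining block `C = V* A V` (with `V` the last columns of `U`) is a compression of `A`, so
`Im C ⪰ 0`; and if `C x = 0`, then `A` kills `V x ∈ (ker A)ᗮ`, so `V x = 0` and `x = 0`.
-/

open Matrix
open scoped ComplexOrder

namespace Matrix

variable {n m ι₁ ι₂ : Type*} [Fintype n]

section Algebra

variable {R : Type*}

theorem conjTranspose_submatrix_id_mul_mul_submatrix_id [Semiring R] [StarRing R]
    (A : Matrix n n R) (W : Matrix n ι₁ R) (e : m → ι₁) :
    (W.submatrix id e)ᴴ * A * W.submatrix id e = (Wᴴ * A * W).submatrix e e := by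
  rw [submatrix_mul _ _ _ id _ Function.bijective_id,
    submatrix_mul _ _ _ id _ Function.bijective_id, submatrix_id_id, conjTranspose_submatrix]

theorem submatrix_id_symm_mem_unitaryGroup [DecidableEq n] [Fintype ι₁] [DecidableEq ι₁]
    [CommRing R] [StarRing R] {W : Matrix n ι₁ R} (hW : Wᴴ * W = 1) (e : ι₁ ≃ n) :
    W.submatrix id e.symm ∈ unitaryGroup n R := by
  rw [mem_unitaryGroup_iff', star_eq_conjTranspose, conjTranspose_submatrix,
    ← submatrix_mul _ _ _ id _ Function.bijective_id, hW, submatrix_one_equiv]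

theorem conjTranspose_fromCols_mul_mul_fromCols [Semiring R] [StarRing R]
    {A : Matrix n n R} {W₁ : Matrix n ι₁ R} (W₂ : Matrix n ι₂ R)
    (hAW : A * W₁ = 0) (hWA : W₁ᴴ * A = 0) :
    (fromCols W₁ W₂)ᴴ * A * fromCols W₁ W₂ = fromBlocks 0 0 0 (W₂ᴴ * A * W₂) := by
  rw [conjTranspose_fromCols_eq_fromRows_conjTranspose, fromRows_mul, fromRows_mul_fromCols,
    hWA, Matrix.mul_assoc, hAW, Matrix.zero_mul, Matrix.mul_zero, Matrix.zero_mul]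

theorem isUnit_det_conjTranspose_mul_mul [Fintype ι₁] [Fintype ι₂] [DecidableEq n]
    [DecidableEq ι₂] [Field R] [StarRing R]
    {A : Matrix n n R} {W₁ : Matrix n ι₁ R} {W₂ : Matrix n ι₂ R}
    (hW : W₁ * W₁ᴴ + W₂ * W₂ᴴ = 1) (hW₂ : W₂ᴴ * W₂ = 1) (hWA : W₁ᴴ * A = 0)
    (hker : ∀ x, A *ᵥ x = 0 → W₂ᴴ *ᵥ x = 0) :
    IsUnit (W₂ᴴ * A * W₂).det := by
  rw [isUnit_iff_ne_zero]
  intro hdet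
  obtain ⟨x, hx0, hCx⟩ := exists_mulVec_eq_zero_iff.2 hdet
  have hAx : A *ᵥ (W₂ *ᵥ x) = 0 := by
    calc A *ᵥ (W₂ *ᵥ x) = ((W₁ * W₁ᴴ + W₂ * W₂ᴴ) * A * W₂) *ᵥ x := by
          rw [hW, Matrix.one_mul, mulVec_mulVec]
      _ = W₁ *ᵥ ((W₁ᴴ * A * W₂) *ᵥ x) + W₂ *ᵥ ((W₂ᴴ * A * W₂) *ᵥ x) := by
          simp only [Matrix.add_mul, add_mulVec, mulVec_mulVec, Matrix.mul_assoc]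
      _ = 0 := by rw [hWA, Matrix.zero_mul, zero_mulVec, hCx, mulVec_zero, mulVec_zero, add_zero]
  refine hx0 ?_
  calc x = (W₂ᴴ * W₂) *ᵥ x := by rw [hW₂, one_mulVec]
    _ = 0 := by rw [← mulVec_mulVec, hker _ hAx]

theorem posSemidef_smul_sub_conjTranspose_conjTranspose_mul_mul [Finite ι₁] [CommRing R]
    [PartialOrder R] [StarRing R] {c : R} {A : Matrix n n R} (hA : (c • (A - Aᴴ)).PosSemidef)
    (B : Matrix n ι₁ R) : (c • (Bᴴ * A * B - (Bᴴ * A * B)ᴴ)).PosSemidef := by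
  have := Fintype.ofFinite ι₁
  convert hA.conjTranspose_mul_mul_same B using 1
  simp only [Matrix.mul_smul, Matrix.smul_mul, Matrix.mul_sub, Matrix.sub_mul,
    conjTranspose_mul, conjTranspose_conjTranspose, Matrix.mul_assoc]

end Algebra

section Euclidean

variable {𝕜 : Type*} [RCLike 𝕜]

theorem conjTranspose_mulVec_eq_zero_of_mulVec_eq_zero {c : 𝕜} (hc : c ≠ 0)
    {A : Matrix n n 𝕜} (hA : (c • (A - Aᴴ)).PosSemidef) {x : n → 𝕜} (hx : A *ᵥ x = 0) :
    Aᴴ *ᵥ x = 0 := by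
  have hquad : star x ⬝ᵥ ((c • (A - Aᴴ)) *ᵥ x) = 0 := by
    rw [smul_mulVec, sub_mulVec, hx, dotProduct_smul, zero_sub, dotProduct_neg,
      dotProduct_mulVec, ← star_mulVec, hx]
    simp
  have := (hA.dotProduct_mulVec_zero_iff x).1 hquad
  rwa [smul_mulVec, smul_eq_zero_iff_right hc, sub_mulVec, hx, zero_sub, neg_eq_zero] at this

theorem finrank_ker_toEuclideanLin [DecidableEq n] (A : Matrix n n 𝕜) :
    Module.finrank 𝕜 (LinearMap.ker (toEuclideanLin A)) =
      Module.finrank 𝕜 (LinearMap.ker (toLin' A)) := by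
  have : LinearMap.ker (toEuclideanLin A) =
      (LinearMap.ker (toLin' A)).map (WithLp.linearEquiv 2 𝕜 (n → 𝕜)).symm.toLinearMap := by
    ext x
    simp [toLpLin_apply, Submodule.mem_map_equiv]
  rw [this, LinearEquiv.finrank_map_eq]

variable [Fintype ι₁] [Fintype ι₂]

theorem fromCols_ofLp_orthonormalBasis_eq_toMatrix (K : Submodule 𝕜 (EuclideanSpace 𝕜 n))
    (b₁ : OrthonormalBasis ι₁ 𝕜 K) (b₂ : OrthonormalBasis ι₂ 𝕜 Kᗮ) :
    fromCols (of fun k i => (b₁ i : EuclideanSpace 𝕜 n) k)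
        (of fun k j => (b₂ j : EuclideanSpace 𝕜 n) k) =
      (EuclideanSpace.basisFun n 𝕜).toBasis.toMatrix
        ((b₁.prod b₂).map K.orthogonalDecomposition.symm) := by
  ext k (i | j) <;> simp [Module.Basis.toMatrix_apply]

theorem exists_conjTranspose_mul_mul_eq_fromBlocks [DecidableEq n] [DecidableEq ι₁]
    [DecidableEq ι₂] {c : 𝕜} (hc : c ≠ 0) {A : Matrix n n 𝕜}
    (hA : (c • (A - Aᴴ)).PosSemidef)
    (b₁ : OrthonormalBasis ι₁ 𝕜 (LinearMap.ker (toEuclideanLin A)))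
    (b₂ : OrthonormalBasis ι₂ 𝕜 (LinearMap.ker (toEuclideanLin A))ᗮ) :
    ∃ W : Matrix n (ι₁ ⊕ ι₂) 𝕜, Wᴴ * W = 1 ∧ ∃ C : Matrix ι₂ ι₂ 𝕜,
      IsUnit C.det ∧ (c • (C - Cᴴ)).PosSemidef ∧ Wᴴ * A * W = fromBlocks 0 0 0 C := by
  set K := LinearMap.ker (toEuclideanLin A)
  have hK : ∀ x : EuclideanSpace 𝕜 n, x ∈ K ↔ A *ᵥ x.ofLp = 0 := by
    simp [K, toLpLin_apply]
  set W₁ : Matrix n ι₁ 𝕜 := of fun k i => (b₁ i : EuclideanSpace 𝕜 n) k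
  set W₂ : Matrix n ι₂ 𝕜 := of fun k j => (b₂ j : EuclideanSpace 𝕜 n) k
  have hW := fromCols_ofLp_orthonormalBasis_eq_toMatrix K b₁ b₂
  have hWW : (fromCols W₁ W₂)ᴴ * fromCols W₁ W₂ = 1 := by
    rw [hW]; exact OrthonormalBasis.toMatrix_orthonormalBasis_conjTranspose_mul_self _ _
  have hW₂W₂ : W₂ᴴ * W₂ = 1 := by
    have := hWW
    rw [conjTranspose_fromCols_eq_fromRows_conjTranspose, fromRows_mul_fromCols,
      ← fromBlocks_one, fromBlocks_inj] at this
    exact this.2.2.2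
  have hWW' : W₁ * W₁ᴴ + W₂ * W₂ᴴ = 1 := by
    rw [← fromCols_mul_fromRows, ← conjTranspose_fromCols_eq_fromRows_conjTranspose, hW]
    exact OrthonormalBasis.toMatrix_orthonormalBasis_self_mul_conjTranspose _ _
  have hAW₁ : A * W₁ = 0 := by
    ext k i
    exact congrFun ((hK _).1 (b₁ i).2) k
  have hWA : W₁ᴴ * A = 0 := by
    rw [← conjTranspose_conjTranspose A, ← conjTranspose_mul, conjTranspose_eq_zero]
    ext k i
    exact congrFun (conjTranspose_mulVec_eq_zero_of_mulVec_eq_zero hc hA ((hK _).1 (b₁ i).2)) k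
  have hker : ∀ x, A *ᵥ x = 0 → W₂ᴴ *ᵥ x = 0 := by
    intro x hx
    ext j
    have := Submodule.inner_left_of_mem_orthogonal ((hK (WithLp.toLp 2 x)).2 hx) (b₂ j).2
    simpa [EuclideanSpace.inner_eq_star_dotProduct, dotProduct_comm, mulVec, dotProduct,
      W₂, mul_comm] using this
  exact ⟨fromCols W₁ W₂, hWW, W₂ᴴ * A * W₂,
    isUnit_det_conjTranspose_mul_mul hWW' hW₂W₂ hWA hker,
    posSemidef_smul_sub_conjTranspose_conjTranspose_mul_mul hA W₂,
    conjTranspose_fromCols_mul_mul_fromCols W₂ hAW₁ hWA⟩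

end Euclidean

end Matrix

theorem block_diagonalize_of_im_psd (d s : ℕ) (A : Matrix (Fin d) (Fin d) ℂ)
    (hA : ((2 * Complex.I)⁻¹ • (A - Aᴴ)).PosSemidef)
    (hs : Module.finrank ℂ (LinearMap.ker (Matrix.toLin' A)) = s) :
    ∃ U : Matrix (Fin d) (Fin d) ℂ, U ∈ Matrix.unitaryGroup (Fin d) ℂ ∧
      ∃ (C : Matrix (Fin (d - s)) (Fin (d - s)) ℂ)
        (e : (Fin s ⊕ Fin (d - s)) ≃ Fin d),
        IsUnit C.det ∧
        ((2 * Complex.I)⁻¹ • (C - Cᴴ)).PosSemidef ∧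
        Uᴴ * A * U =
          Matrix.submatrix (Matrix.fromBlocks 0 0 0 C) e.symm e.symm := by
  set K := LinearMap.ker (toEuclideanLin A)
  have hK : Module.finrank ℂ K = s := (finrank_ker_toEuclideanLin A).trans hs
  have hKd : Module.finrank ℂ K + Module.finrank ℂ Kᗮ = d := by
    rw [K.finrank_add_finrank_orthogonal, finrank_euclideanSpace_fin]
  have hKo : Module.finrank ℂ Kᗮ = d - s := by omega
  obtain ⟨W, hW, C, hC, hCim, hWAW⟩ := exists_conjTranspose_mul_mul_eq_fromBlocks
    (by simp) hA ((stdOrthonormalBasis ℂ K).reindex (finCongr hK))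
    ((stdOrthonormalBasis ℂ Kᗮ).reindex (finCongr hKo))
  let e : (Fin s ⊕ Fin (d - s)) ≃ Fin d := finSumFinEquiv.trans (finCongr (by omega))
  refine ⟨W.submatrix id e.symm, submatrix_id_symm_mem_unitaryGroup hW e, C, e, hC, hCim, ?_⟩
  rw [conjTranspose_submatrix_id_mul_mul_submatrix_id, hWAW]
end

section
/- Let p ∈ ℂ[z₁, …, z_n] be a stable polynomial. Then for all x ∈ ℝⁿ and all y ∈ ℝⁿ with y_j > 0 for every j, |p(x + iy)| ≥ |p(x − iy)|, where x ± iy denotes the point (x₁ ± iy₁, …, x_n ± iy_n) ∈ ℂⁿ. -/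
/-!
Restrict `p` to the complex line `t ↦ x + t y`. Since every `y j > 0`, this line maps the upper
half-plane into `ℂ₊ⁿ`, so the univariate restriction `q` has all its roots in the closed lower
half-plane. Factoring `|q t| = |c| ∏ |t - r|` over the roots, each factor is at least as large at
`t = i` as at `t = -i = conj i`, since `i` is at least as far as `-i` from any `r` with `Im r ≤ 0`.
-/

open MvPolynomial ComplexConjugate

namespace Complex

lemma norm_conj_sub_le_norm_sub {z r : ℂ} (hz : 0 ≤ z.im) (hr : r.im ≤ 0) :
    ‖conj z - r‖ ≤ ‖z - r‖ := by
  rw [← sq_le_sq₀ (norm_nonneg _) (norm_nonneg _), Complex.sq_norm, Complex.sq_norm,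
    normSq_apply, normSq_apply]
  simp only [sub_re, sub_im, conj_re, conj_im]
  nlinarith

end Complex

namespace Polynomial

lemma norm_eval_eq_norm_leadingCoeff_mul_prod_roots (q : ℂ[X]) (z : ℂ) :
    ‖q.eval z‖ = ‖q.leadingCoeff‖ * (q.roots.map fun r => ‖z - r‖).prod := by
  rw [(IsAlgClosed.splits q).eval_eq_prod_roots, norm_mul,
    ← normHom_apply (q.roots.map _).prod, map_multiset_prod, Multiset.map_map]
  rfl

lemma norm_eval_conj_le_of_forall_im_pos {q : ℂ[X]} (hq : ∀ t : ℂ, 0 < t.im → q.eval t ≠ 0)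
    {z : ℂ} (hz : 0 ≤ z.im) : ‖q.eval (conj z)‖ ≤ ‖q.eval z‖ := by
  rw [norm_eval_eq_norm_leadingCoeff_mul_prod_roots, norm_eval_eq_norm_leadingCoeff_mul_prod_roots]
  gcongr
  refine Multiset.prod_map_le_prod_map₀ _ _ (fun _ _ => norm_nonneg _) fun r hr => ?_
  exact Complex.norm_conj_sub_le_norm_sub hz <| not_lt.mp fun h => hq r h (isRoot_of_mem_roots hr)

end Polynomial

namespace MvPolynomial

variable {σ R : Type*} [CommSemiring R]

noncomputable def restrictLine (p : MvPolynomial σ R) (x y : σ → R) : Polynomial R :=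
  eval₂ Polynomial.C (fun j => Polynomial.C (x j) + Polynomial.C (y j) * Polynomial.X) p

lemma eval_restrictLine (p : MvPolynomial σ R) (x y : σ → R) (t : R) :
    (p.restrictLine x y).eval t = eval (fun j => x j + y j * t) p := by
  have : (Polynomial.evalRingHom t).comp Polynomial.C = RingHom.id R :=
    RingHom.ext fun _ => Polynomial.eval_C
  simp [restrictLine, polynomial_eval_eval₂, this, eval₂_id]

end MvPolynomial

theorem abs_ge_of_reflect (n : ℕ) (p : MvPolynomial (Fin n) ℂ)
    (hstable : ∀ z : Fin n → ℂ, (∀ j, 0 < (z j).im) → eval z p ≠ 0) :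
    ∀ (x y : Fin n → ℝ), (∀ j, 0 < y j) →
      ‖eval (fun j => (x j : ℂ) + Complex.I * (y j : ℂ)) p‖ ≥
        ‖eval (fun j => (x j : ℂ) - Complex.I * (y j : ℂ)) p‖ := by
  intro x y hy
  have hline : ∀ t : ℂ, 0 < t.im → (p.restrictLine (x ·) (y ·)).eval t ≠ 0 := fun t ht => by
    rw [eval_restrictLine]
    exact hstable _ fun j => by simpa using mul_pos (hy j) ht
  have h := Polynomial.norm_eval_conj_le_of_forall_im_pos hline (z := Complex.I) (by simp)
  rw [eval_restrictLine, eval_restrictLine, Complex.conj_I] at h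
  convert h using 4 <;> funext j <;> ring
end
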